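/- arXiv:math/0410468 — 4 statements merged into one kernel-verified Lean document; each statement's English description precedes it below -/
import Mathlib

section
/- For any prime p and any composition α, the Frobenius operation f_p on QSymm satisfies f_p(M_α) ≡ (M_α)^p modulo p, where f_p is the algebra endomorphism sending M_{[a_1,...,a_m]} to M_{[pa_1,...,pa_m]}. -/
/-- The monomial quasisymmetric function `M_α = ∑_{i₁<…<i_m} X_{i₁}^{a₁} ⋯ X_{i_m}^{a_m}`
as a multivariate power series in countably many variables `X_0 < X_1 < …`:
its coefficient at an exponent function `d` is `1` exactly when the list of values of `d`
on its support, taken in increasing order of the variables, equals `α`. -/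
noncomputable def Mq (α : List ℕ) : MvPowerSeries ℕ ℤ :=
  fun d => if (d.support.sort (· ≤ ·)).map (fun i => d i) = α then 1 else 0

/-!
In characteristic `p` a power series satisfies `f ^ p = map (frobenius R p) (expand p f)`, and the
Frobenius of `ZMod p` is the identity, so `f ^ p ≡ expand p f` modulo `p` for every `f` over `ℤ`.
For `f = M_α` this is the claim, since `expand p M_α = M_{pα}`: an exponent whose ordered nonzero
values are `p·α` is `p • e` for an exponent `e` whose ordered values are `α`.
-/

namespace MvPowerSeries

variable {σ : Type*}

theorem exists_eq_natCast_mul_of_map_eq_zero {n : ℕ} {f : MvPowerSeries σ ℤ}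
    (hf : map (Int.castRingHom (ZMod n)) f = 0) : ∃ g, f = (n : MvPowerSeries σ ℤ) * g := by
  have hdvd (d : σ →₀ ℕ) : (n : ℤ) ∣ coeff d f := by
    rw [← ZMod.intCast_zmod_eq_zero_iff_dvd, ← eq_intCast (Int.castRingHom (ZMod n)),
      ← coeff_map, hf, map_zero]
  choose g hg using hdvd
  refine ⟨show MvPowerSeries σ ℤ from g, ext fun d => ?_⟩
  rw [hg, ← map_natCast (C (σ := σ)), coeff_C_mul]
  rfl

theorem exists_expand_sub_pow_eq_natCast_mul {p : ℕ} [Fact p.Prime] (f : MvPowerSeries σ ℤ) :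
    ∃ g, expand p (NeZero.ne p) f - f ^ p = (p : MvPowerSeries σ ℤ) * g := by
  apply exists_eq_natCast_mul_of_map_eq_zero
  rw [map_sub, map_pow, ← map_frobenius_expand p (NeZero.ne p), ← map_expand, map_map,
    ZMod.frobenius_zmod, RingHom.id_comp, sub_self]

end MvPowerSeries

def orderedValues (d : ℕ →₀ ℕ) : List ℕ := (d.support.sort (· ≤ ·)).map d

theorem coeff_Mq (α : List ℕ) (d : ℕ →₀ ℕ) :
    MvPowerSeries.coeff d (Mq α) = if orderedValues d = α then 1 else 0 := rfl

theorem orderedValues_nsmul {p : ℕ} (hp : p ≠ 0) (e : ℕ →₀ ℕ) :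
    orderedValues (p • e) = (orderedValues e).map (p * ·) := by
  rw [orderedValues, orderedValues, Finsupp.support_smul_eq hp, List.map_map]
  rfl

theorem dvd_of_orderedValues_eq_map {p : ℕ} {d : ℕ →₀ ℕ} {α : List ℕ}
    (h : orderedValues d = α.map (p * ·)) (i : ℕ) : p ∣ d i := by
  rcases eq_or_ne (d i) 0 with hi | hi
  · simp [hi]
  have hmem : d i ∈ α.map (p * ·) :=
    h ▸ List.mem_map_of_mem ((Finset.mem_sort _).2 (Finsupp.mem_support_iff.2 hi))
  obtain ⟨a, -, ha⟩ := List.mem_map.1 hmem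
  exact ⟨a, ha.symm⟩

theorem expand_Mq {p : ℕ} (hp : p ≠ 0) (α : List ℕ) :
    MvPowerSeries.expand p hp (Mq α) = Mq (α.map (p * ·)) := by
  ext d
  by_cases! hd : ∀ i, p ∣ d i
  · obtain ⟨m, rfl⟩ : ∃ m, p • m = d :=
      ⟨d.mapRange (· / p) (Nat.zero_div p), by ext i; simp [Nat.mul_div_cancel' (hd i)]⟩
    rw [MvPowerSeries.coeff_expand_smul, coeff_Mq, coeff_Mq, orderedValues_nsmul hp]
    simp only [(List.map_injective_iff.2 (mul_right_injective₀ hp)).eq_iff]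
  · obtain ⟨i, hi⟩ := hd
    rw [MvPowerSeries.coeff_expand_of_not_dvd p hp _ hi, coeff_Mq,
      if_neg fun h => hi (dvd_of_orderedValues_eq_map h i)]

theorem frobenius_congruence_qsymm_general
    (p : ℕ) (hp : p.Prime) (α : List ℕ) :
    ∃ g : MvPowerSeries ℕ ℤ,
      Mq (α.map (fun a => p * a)) - (Mq α) ^ p = (p : MvPowerSeries ℕ ℤ) * g := by
  have : Fact p.Prime := ⟨hp⟩
  rw [← expand_Mq hp.ne_zero]
  exact MvPowerSeries.exists_expand_sub_pow_eq_natCast_mul (Mq α)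

/-- For any prime `p` and any composition `α = [a₁,…,a_m]` (a list of positive integers),
the Frobenius operation `f_p`, which sends `M_{[a₁,…,a_m]}` to `M_{[p·a₁,…,p·a_m]}`,
satisfies `f_p(M_α) ≡ (M_α)^p` modulo `p`. -/
theorem frobenius_congruence_qsymm
    (p : ℕ) (hp : p.Prime) (α : List ℕ) (hα : ∀ a ∈ α, 0 < a) :
    ∃ g : MvPowerSeries ℕ ℤ,
      Mq (α.map (fun a => p * a)) - (Mq α) ^ p = (p : MvPowerSeries ℕ ℤ) * g :=
  frobenius_congruence_qsymm_general p hp α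
end

section
/- The overlapping shuffle product on the free Z-module with basis all compositions is associative, with the empty composition as the unit element. -/
/-- The overlapping shuffle product of two compositions, defined by the recursion
`[] * β = β`, `α * [] = α`,
`(a::α') * (b::β') = a::(α' * (b::β')) + b::((a::α') * β') + (a+b)::(α' * β')`. -/
noncomputable def osh : List ℕ+ → List ℕ+ → (List ℕ+ →₀ ℤ)
  | [], β => Finsupp.single β 1
  | a :: α', [] => Finsupp.single (a :: α') 1
  | a :: α', b :: β' =>
      Finsupp.mapDomain (a :: ·) (osh α' (b :: β'))
        + Finsupp.mapDomain (b :: ·) (osh (a :: α') β')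
        + Finsupp.mapDomain ((a + b) :: ·) (osh α' β')
  termination_by α β => α.length + β.length
  decreasing_by all_goals (simp [List.length_cons]; try omega)

/-- The `ℤ`-bilinear extension of the overlapping shuffle product. -/
noncomputable def oshMul (x y : List ℕ+ →₀ ℤ) : List ℕ+ →₀ ℤ :=
  x.sum fun α c => y.sum fun β d => (c * d) • osh α β

/-!
Extend the product bilinearly and write `[a]x` for `x` with the part `a` prepended to every
composition. The defining recursion then holds for all `x y`:
`[a]x * [b]y = [a](x * [b]y) + [b]([a]x * y) + [a+b](x * y)`.
Applying it twice shows that `([a]x * [b]y) * [c]z` and `[a]x * ([b]y * [c]z)` both expand into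
the same seven terms, one for each nonempty subset of `{a, b, c}`, with products of smaller total
length inside; so associativity on compositions follows by induction on the total length, and
bilinearity extends it to everything.
-/

open Finsupp

theorem LinearMap.assoc_of_single {R ι : Type*} [CommSemiring R]
    (B : (ι →₀ R) →ₗ[R] (ι →₀ R) →ₗ[R] (ι →₀ R))
    (h : ∀ a b c, B (B (Finsupp.single a 1) (Finsupp.single b 1)) (Finsupp.single c 1)
      = B (Finsupp.single a 1) (B (Finsupp.single b 1) (Finsupp.single c 1)))
    (x y z : ι →₀ R) : B (B x y) z = B x (B y z) := by
  have : B.compr₂ B = (LinearMap.llcomp R _ _ _).compl₁₂ B B := by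
    ext a b c : 6
    simpa using h a b c
  exact congr($this x y z)

noncomputable def consMap (a : ℕ+) : (List ℕ+ →₀ ℤ) →ₗ[ℤ] (List ℕ+ →₀ ℤ) :=
  lmapDomain ℤ ℤ (List.cons a)

@[simp]
theorem consMap_single (a : ℕ+) (α : List ℕ+) (c : ℤ) :
    consMap a (single α c) = single (a :: α) c :=
  mapDomain_single

@[simp]
theorem osh_nil_left (β : List ℕ+) : osh [] β = single β 1 := by rw [osh]

@[simp]
theorem osh_nil_right (α : List ℕ+) : osh α [] = single α 1 := by cases α <;> rw [osh]

theorem osh_cons_cons (a b : ℕ+) (α β : List ℕ+) :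
    osh (a :: α) (b :: β) = consMap a (osh α (b :: β)) + consMap b (osh (a :: α) β)
      + consMap (a + b) (osh α β) := by
  rw [osh]; rfl

noncomputable def oshMulₗ : (List ℕ+ →₀ ℤ) →ₗ[ℤ] (List ℕ+ →₀ ℤ) →ₗ[ℤ] (List ℕ+ →₀ ℤ) :=
  Finsupp.lift _ ℤ _ fun α => Finsupp.lift _ ℤ _ (osh α)

theorem oshMul_eq_oshMulₗ (x y : List ℕ+ →₀ ℤ) : oshMul x y = oshMulₗ x y := by
  simp [oshMul, oshMulₗ, Finsupp.smul_sum, smul_smul]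

@[simp]
theorem oshMulₗ_single_single (α β : List ℕ+) (c d : ℤ) :
    oshMulₗ (single α c) (single β d) = (c * d) • osh α β := by
  simp [oshMulₗ, mul_comm, smul_smul]

theorem oshMulₗ_consMap_consMap (a b : ℕ+) (x y : List ℕ+ →₀ ℤ) :
    oshMulₗ (consMap a x) (consMap b y) = consMap a (oshMulₗ x (consMap b y))
      + consMap b (oshMulₗ (consMap a x) y) + consMap (a + b) (oshMulₗ x y) := by
  induction x using Finsupp.induction_linear with
  | zero => simp
  | add x₁ x₂ h₁ h₂ => simp only [map_add, LinearMap.add_apply, h₁, h₂]; abel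
  | single α c =>
    induction y using Finsupp.induction_linear with
    | zero => simp
    | add y₁ y₂ h₁ h₂ => simp only [map_add, h₁, h₂]; abel
    | single β d => simp [osh_cons_cons, smul_add]

@[simp]
theorem oshMulₗ_nil_left (x : List ℕ+ →₀ ℤ) : oshMulₗ (single [] 1) x = x := by
  induction x using Finsupp.induction_linear with
  | zero => simp
  | add x₁ x₂ h₁ h₂ => simp only [map_add, h₁, h₂]
  | single β d => simp

@[simp]
theorem oshMulₗ_nil_right (x : List ℕ+ →₀ ℤ) : oshMulₗ x (single [] 1) = x := by
  induction x using Finsupp.induction_linear with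
  | zero => simp
  | add x₁ x₂ h₁ h₂ => simp only [map_add, LinearMap.add_apply, h₁, h₂]
  | single β d => simp

theorem oshMulₗ_oshMulₗ_consMap (a b c : ℕ+) (x y z : List ℕ+ →₀ ℤ) :
    oshMulₗ (oshMulₗ (consMap a x) (consMap b y)) (consMap c z)
      = consMap a (oshMulₗ (oshMulₗ x (consMap b y)) (consMap c z))
      + consMap b (oshMulₗ (oshMulₗ (consMap a x) y) (consMap c z))
      + consMap (a + b) (oshMulₗ (oshMulₗ x y) (consMap c z))
      + consMap c (oshMulₗ (oshMulₗ (consMap a x) (consMap b y)) z)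
      + consMap (a + c) (oshMulₗ (oshMulₗ x (consMap b y)) z)
      + consMap (b + c) (oshMulₗ (oshMulₗ (consMap a x) y) z)
      + consMap (a + b + c) (oshMulₗ (oshMulₗ x y) z) := by
  simp only [oshMulₗ_consMap_consMap a b x y, map_add, LinearMap.add_apply,
    oshMulₗ_consMap_consMap _ c]
  abel

theorem oshMulₗ_consMap_oshMulₗ (a b c : ℕ+) (x y z : List ℕ+ →₀ ℤ) :
    oshMulₗ (consMap a x) (oshMulₗ (consMap b y) (consMap c z))
      = consMap a (oshMulₗ x (oshMulₗ (consMap b y) (consMap c z)))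
      + consMap b (oshMulₗ (consMap a x) (oshMulₗ y (consMap c z)))
      + consMap (a + b) (oshMulₗ x (oshMulₗ y (consMap c z)))
      + consMap c (oshMulₗ (consMap a x) (oshMulₗ (consMap b y) z))
      + consMap (a + c) (oshMulₗ x (oshMulₗ (consMap b y) z))
      + consMap (b + c) (oshMulₗ (consMap a x) (oshMulₗ y z))
      + consMap (a + b + c) (oshMulₗ x (oshMulₗ y z)) := by
  simp only [oshMulₗ_consMap_consMap b c y z, map_add, oshMulₗ_consMap_consMap a,
    add_assoc a b c]
  abel

theorem oshMulₗ_assoc_single : ∀ α β γ : List ℕ+,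
    oshMulₗ (oshMulₗ (single α 1) (single β 1)) (single γ 1)
      = oshMulₗ (single α 1) (oshMulₗ (single β 1) (single γ 1))
  | [], _, _ | _, [], _ | _, _, [] => by simp
  | a :: α, b :: β, c :: γ => by
    rw [← consMap_single a, ← consMap_single b, ← consMap_single c, oshMulₗ_oshMulₗ_consMap,
      oshMulₗ_consMap_oshMulₗ]
    simp only [consMap_single]
    rw [oshMulₗ_assoc_single α (b :: β) (c :: γ), oshMulₗ_assoc_single (a :: α) β (c :: γ),
      oshMulₗ_assoc_single α β (c :: γ), oshMulₗ_assoc_single (a :: α) (b :: β) γ,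
      oshMulₗ_assoc_single α (b :: β) γ, oshMulₗ_assoc_single (a :: α) β γ,
      oshMulₗ_assoc_single α β γ]
termination_by α β γ => α.length + β.length + γ.length

/-- The overlapping shuffle product on the free `ℤ`-module with basis all
compositions is associative, with the empty composition as unit element. -/
theorem oshMul_assoc_unit :
    (∀ x y w : List ℕ+ →₀ ℤ, oshMul (oshMul x y) w = oshMul x (oshMul y w)) ∧
    (∀ x : List ℕ+ →₀ ℤ,
      oshMul (Finsupp.single ([] : List ℕ+) 1) x = x ∧
      oshMul x (Finsupp.single ([] : List ℕ+) 1) = x) := by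
  simp only [oshMul_eq_oshMulₗ]
  exact ⟨LinearMap.assoc_of_single oshMulₗ oshMulₗ_assoc_single,
    fun x => ⟨oshMulₗ_nil_left x, oshMulₗ_nil_right x⟩⟩
end

section
/- In NSymm, the antipode ι satisfies, for every composition α, ι(Z_α) = Σ_{β refines α^t} (-1)^{length(β)} Z_β, where α^t is the reverse of α and β refines α means there are indices 1 ≤ j_1 < j_2 < ... < j_m = length(β) with a_i = b_{j_{i-1}+1} + ... + b_{j_i} (j_0 = 0). -/
/-!
Since `ι` reverses products, `ι(Z_α) = ι(Z_{a_m}) ⋯ ι(Z_{a_1})`, and each factor `ι(Z_a)` is the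
signed sum of `Z_γ` over all compositions `γ` of `a`, i.e. over the refinements of `[a]`.
Expanding the product, concatenation `(γ_m, …, γ_1) ↦ γ_m ++ ⋯ ++ γ_1` is a bijection onto the
refinements of `αᵗ`, and the signs multiply because lengths add.
-/

/-- `NSymm = ℤ⟨Z₁, Z₂, …⟩`, the generator indexed by `n` representing `Z_{n+1}`. -/
abbrev NSymm : Type := FreeAlgebra ℤ ℕ

/-- The generators `Z_n`, with `Z 0 = 1`. -/
noncomputable def Z : ℕ → NSymm
  | 0 => 1
  | n + 1 => FreeAlgebra.ι ℤ n

/-- `b` refines `a` (as lists of block sizes): `b` can be split into consecutive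
groups whose sums are the entries of `a`. -/
def Refines (b a : List ℕ) : Prop :=
  ∃ γ : List (List ℕ), γ.flatten = b ∧ γ.map List.sum = a

namespace Refines

theorem sum_eq {b a : List ℕ} (h : Refines b a) : b.sum = a.sum := by
  obtain ⟨γ, rfl, rfl⟩ := h
  exact List.sum_flatten

theorem nil : Refines [] [] := ⟨[], rfl, rfl⟩

end Refines

theorem refines_singleton_iff {b : List ℕ} {a : ℕ} : Refines b [a] ↔ b.sum = a :=
  ⟨fun h => by simpa using h.sum_eq, fun h => ⟨[b], by simp, by simp [h]⟩⟩

theorem refines_append_iff {d u v : List ℕ} :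
    Refines d (u ++ v) ↔ ∃ b c, d = b ++ c ∧ Refines b u ∧ Refines c v := by
  constructor
  · rintro ⟨γ, rfl, hγ⟩
    obtain ⟨γ₁, γ₂, rfl, rfl, rfl⟩ := List.map_eq_append_iff.1 hγ
    exact ⟨γ₁.flatten, γ₂.flatten, List.flatten_append, ⟨γ₁, rfl, rfl⟩, ⟨γ₂, rfl, rfl⟩⟩
  · rintro ⟨b, c, rfl, ⟨γ₁, rfl, rfl⟩, ⟨γ₂, rfl, rfl⟩⟩
    exact ⟨γ₁ ++ γ₂, List.flatten_append, List.map_append⟩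

theorem List.eq_of_append_eq_append_of_sum_eq {p₁ q₁ p₂ q₂ : List ℕ}
    (h₁ : ∀ x ∈ p₁, 0 < x) (h₂ : ∀ x ∈ p₂, 0 < x)
    (h : p₁ ++ q₁ = p₂ ++ q₂) (hs : p₁.sum = p₂.sum) : p₁ = p₂ := by
  have nil_of_sum_eq_zero (r : List ℕ) (hr : ∀ x ∈ r, 0 < x) (h0 : r.sum = 0) : r = [] :=
    List.eq_nil_iff_forall_not_mem.2 fun x hx => (hr x hx).ne' (List.sum_eq_zero_iff.1 h0 x hx)
  rcases List.append_eq_append_iff.1 h with ⟨r, rfl, -⟩ | ⟨r, rfl, -⟩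
  · rw [nil_of_sum_eq_zero r (fun x hx => h₂ x (by simp [hx])) (by simpa using hs),
      List.append_nil]
  · rw [nil_of_sum_eq_zero r (fun x hx => h₁ x (by simp [hx])) (by simpa using hs.symm),
      List.append_nil]

namespace Composition

theorem eq_ones_zero (c : Composition 0) : c = ones 0 := by
  ext1
  refine List.eq_nil_iff_forall_not_mem.2 fun x hx => (c.blocks_pos hx).ne' ?_
  exact List.sum_eq_zero_iff.1 c.blocks_sum x hx

theorem append_inj {m n : ℕ} {β₁ β₂ : Composition m} {γ₁ γ₂ : Composition n}
    (h : β₁.append γ₁ = β₂.append γ₂) : β₁ = β₂ ∧ γ₁ = γ₂ := by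
  have hblocks : β₁.blocks ++ γ₁.blocks = β₂.blocks ++ γ₂.blocks := congrArg blocks h
  have hβ : β₁.blocks = β₂.blocks :=
    List.eq_of_append_eq_append_of_sum_eq (fun _ => β₁.blocks_pos) (fun _ => β₂.blocks_pos)
      hblocks (by rw [β₁.blocks_sum, β₂.blocks_sum])
  rw [hβ, List.append_cancel_left_eq] at hblocks
  exact ⟨Composition.ext hβ, Composition.ext hblocks⟩

theorem exists_eq_append_of_blocks_eq_append {m n : ℕ} {δ : Composition (m + n)}
    {b c : List ℕ} (h : δ.blocks = b ++ c) (hb : b.sum = m) :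
    ∃ (β : Composition m) (γ : Composition n), δ = β.append γ ∧ β.blocks = b ∧ γ.blocks = c := by
  have hpos : ∀ x ∈ b ++ c, 0 < x := fun _ hx => δ.blocks_pos (h ▸ hx)
  have hc : c.sum = n := by
    have := δ.blocks_sum
    rw [h, List.sum_append, hb] at this
    omega
  refine ⟨⟨b, fun hx => hpos _ (List.mem_append_left c hx), hb⟩,
    ⟨c, fun hx => hpos _ (List.mem_append_right b hx), hc⟩, Composition.ext h, rfl, rfl⟩

open scoped Classical in
theorem sum_refines_append {M : Type*} [AddCommMonoid M] {m n : ℕ} {u v : List ℕ}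
    (hu : u.sum = m) (f : Composition (m + n) → M) :
    ∑ δ ∈ Finset.univ.filter (fun δ : Composition (m + n) => Refines δ.blocks (u ++ v)), f δ
      = ∑ β ∈ Finset.univ.filter (fun β : Composition m => Refines β.blocks u),
          ∑ γ ∈ Finset.univ.filter (fun γ : Composition n => Refines γ.blocks v),
            f (β.append γ) := by
  rw [← Finset.sum_product']
  symm
  refine Finset.sum_bij (fun p _ => p.1.append p.2) ?_ ?_ ?_ (fun _ _ => rfl)
  · rintro ⟨β, γ⟩ hp
    simp only [Finset.mem_product, Finset.mem_filter, Finset.mem_univ, true_and] at hp ⊢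
    exact refines_append_iff.2 ⟨_, _, rfl, hp⟩
  · rintro ⟨β₁, γ₁⟩ - ⟨β₂, γ₂⟩ - h
    obtain ⟨rfl, rfl⟩ := append_inj h
    rfl
  · intro δ hδ
    simp only [Finset.mem_filter, Finset.mem_univ, true_and] at hδ
    obtain ⟨b, c, hbc, hbu, hcv⟩ := refines_append_iff.1 hδ
    obtain ⟨β, γ, rfl, rfl, rfl⟩ :=
      exists_eq_append_of_blocks_eq_append hbc (hbu.sum_eq.trans hu)
    exact ⟨(β, γ), by simp [hbu, hcv], rfl⟩

end Composition

open scoped Classical in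
/-- The sum is empty unless `l.sum = n`; `n` is a separate argument so that it can be the index
of the compositions at hand rather than a propositionally equal `l.sum`. -/
noncomputable def refinementSum (n : ℕ) (l : List ℕ) : NSymm :=
  ∑ β ∈ Finset.univ.filter (fun β : Composition n => Refines β.blocks l),
    ((-1 : ℤ) ^ β.length) • (β.blocks.map Z).prod

theorem refinementSum_zero_nil : refinementSum 0 [] = 1 := by
  rw [refinementSum, Finset.sum_eq_single_of_mem (Composition.ones 0)
    (by simp [Refines.nil]) fun c _ hc => absurd c.eq_ones_zero hc]
  simp

open scoped Classical in
theorem refinementSum_singleton (n : ℕ) :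
    refinementSum n [n] = ∑ β : Composition n, ((-1 : ℤ) ^ β.length) • (β.blocks.map Z).prod := by
  rw [refinementSum, Finset.filter_true_of_mem fun β _ => refines_singleton_iff.2 β.blocks_sum]

theorem refinementSum_append {m n : ℕ} {u v : List ℕ} (hu : u.sum = m) :
    refinementSum (m + n) (u ++ v) = refinementSum m u * refinementSum n v := by
  rw [refinementSum, Composition.sum_refines_append hu, refinementSum, refinementSum,
    Finset.sum_mul_sum]
  refine Finset.sum_congr rfl fun β _ => Finset.sum_congr rfl fun γ _ => ?_
  rw [smul_mul_smul_comm, ← pow_add]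
  simp [Composition.length]

open scoped Classical in
/-- In `NSymm`, the antipode `ι` (the ring anti-endomorphism with
`ι(Z_n) = ∑_{wt(α)=n} (-1)^{length(α)} Z_α`) satisfies, for every composition `α`,
`ι(Z_α) = ∑_{β refines αᵗ} (-1)^{length(β)} Z_β`, where `αᵗ` is the reverse of `α`. -/
theorem nsymm_antipode_on_Z_alpha
    (ι : NSymm →ₗ[ℤ] NSymm)
    (hι1 : ι 1 = 1)
    (hιmul : ∀ x y : NSymm, ι (x * y) = ι y * ι x)
    (hιZ : ∀ n : ℕ, ι (Z (n + 1)) =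
      ∑ α : Composition (n + 1), ((-1 : ℤ) ^ α.length) • (α.blocks.map Z).prod) :
    ∀ (n : ℕ) (α : Composition n),
      ι ((α.blocks.map Z).prod)
        = ∑ β ∈ Finset.univ.filter
            (fun β : Composition n => Refines β.blocks α.blocks.reverse),
            ((-1 : ℤ) ^ β.length) • (β.blocks.map Z).prod := by
  intro n α
  change ι _ = refinementSum n α.blocks.reverse
  induction α using Composition.recOnSingleAppend with
  | zero => simp [hι1, refinementSum_zero_nil]
  | single_append k n c ih =>
    have hZ : ι (Z (k + 1)) = refinementSum (k + 1) [k + 1] := by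
      rw [hιZ, refinementSum_singleton]
    rw [Composition.append_blocks, List.map_append, List.prod_append, Composition.single_blocks,
      List.map_singleton, List.prod_singleton, hιmul, ih, hZ, List.reverse_append,
      List.reverse_singleton, add_comm (k + 1) n, refinementSum_append (by simp)]
end

section
/- The standardization-cut coproduct μ_MPR(σ) = Σ_{α*β=σ} st(α) ⊗ st(β) on MPR = ⊕_n Z S_n is coassociative, where the sum is over all ways to write the word of σ as a concatenation α*β, and st(γ) is the unique permutation word with the same relative order of letters as γ. -/
open TensorProduct

/-! Standardization commutes with taking factors: `st ((st w)[i:j]) = st (w[i:j])`, because `st w` is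
the image of `w` under the rank map `a ↦ 1 + #{b ∈ w | b < a}`, which is strictly increasing on the
letters of `w`, and `st` is invariant under such relabellings. Hence both iterated coproducts of `σ`
equal `∑_{α*β*γ = σ} st α ⊗ st β ⊗ st γ`, the two ways of cutting twice being reindexings of each
other. -/

/-- The standardization of a word with distinct letters: the unique permutation
word with the same relative order of letters (`b_i = 1 + #{j : a_j < a_i}`). -/
def stdz (α : List ℕ) : List ℕ :=
  α.map fun a => 1 + (α.filter fun b => b < a).length

/-- The standardization-cut coproduct on a basis word:
`μ(σ) = ∑_{α*β=σ} st(α) ⊗ st(β)`, the sum over all ways of cutting `σ`. -/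
noncomputable def cutStdB (σ : List ℕ) :
    (List ℕ →₀ ℤ) ⊗[ℤ] (List ℕ →₀ ℤ) :=
  ∑ i ∈ Finset.range (σ.length + 1),
    Finsupp.single (stdz (σ.take i)) (1 : ℤ) ⊗ₜ[ℤ] Finsupp.single (stdz (σ.drop i)) (1 : ℤ)

/-- Its `ℤ`-linear extension `μ_MPR`. -/
noncomputable def cutStd : (List ℕ →₀ ℤ) →ₗ[ℤ] (List ℕ →₀ ℤ) ⊗[ℤ] (List ℕ →₀ ℤ) :=
  Finsupp.lsum ℤ fun σ => LinearMap.toSpanSingleton ℤ _ (cutStdB σ)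

open Finset

theorem sum_cut_take_eq_sum_cut_drop {α M : Type*} [AddCommMonoid M] (l : List α)
    (f : List α → List α → List α → M) :
    ∑ j ∈ range (l.length + 1), ∑ i ∈ range ((l.take j).length + 1),
        f ((l.take j).take i) ((l.take j).drop i) (l.drop j) =
      ∑ i ∈ range (l.length + 1), ∑ k ∈ range ((l.drop i).length + 1),
        f (l.take i) ((l.drop i).take k) ((l.drop i).drop k) := by
  set g : ℕ → ℕ → M := fun i j => f (l.take i) ((l.drop i).take (j - i)) (l.drop j)
  have left (j) (hj : j ∈ range (l.length + 1)) :
      ∑ i ∈ range ((l.take j).length + 1), f ((l.take j).take i) ((l.take j).drop i) (l.drop j) =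
        ∑ i ∈ Ico 0 (j + 1), g i j := by
    rw [mem_range] at hj
    rw [List.length_take, min_eq_left (by omega), range_eq_Ico]
    refine sum_congr rfl fun i hi => ?_
    rw [mem_Ico] at hi
    rw [List.take_take, min_eq_left (by omega), List.drop_take]
  have right (i) (hi : i ∈ range (l.length + 1)) :
      ∑ k ∈ range ((l.drop i).length + 1), f (l.take i) ((l.drop i).take k) ((l.drop i).drop k) =
        ∑ j ∈ Ico i (l.length + 1), g i j := by
    rw [mem_range] at hi
    rw [sum_Ico_eq_sum_range, List.length_drop, Nat.sub_add_comm (by omega)]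
    refine sum_congr rfl fun k _ => ?_
    simp only [g, Nat.add_sub_cancel_left, List.drop_drop]
  rw [sum_congr rfl left, sum_congr rfl right, range_eq_Ico, sum_Ico_Ico_comm]

def stdRank (w : List ℕ) (a : ℕ) : ℕ := 1 + (w.filter (· < a)).length

theorem stdz_eq_map_stdRank (w : List ℕ) : stdz w = w.map (stdRank w) := rfl

theorem stdRank_lt_stdRank {w : List ℕ} {a b : ℕ} (hb : b ∈ w) (hba : b < a) :
    stdRank w b < stdRank w a := by
  have hfilter : (w.filter (· < a)).filter (· < b) = w.filter (· < b) := by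
    rw [List.filter_filter]
    exact List.filter_congr fun c _ => by grind
  have hlt : ((w.filter (· < a)).filter (· < b)).length < (w.filter (· < a)).length :=
    List.length_filter_lt_length_iff_exists.2 ⟨b, List.mem_filter.2 ⟨hb, by simpa⟩, by simp⟩
  rw [hfilter] at hlt
  exact Nat.add_lt_add_left hlt 1

theorem strictMonoOn_stdRank (w : List ℕ) : StrictMonoOn (stdRank w) {a | a ∈ w} :=
  fun _ hb _ _ hba => stdRank_lt_stdRank hb hba

theorem stdz_map_of_strictMonoOn {l : List ℕ} {f : ℕ → ℕ} (hf : StrictMonoOn f {a | a ∈ l}) :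
    stdz (l.map f) = stdz l := by
  simp only [stdz, List.map_map, List.filter_map, List.length_map]
  refine List.map_congr_left fun a ha => ?_
  simp only [Function.comp_apply]
  congr 2
  exact List.filter_congr fun b hb => by simp [hf.lt_iff_lt hb ha]

theorem stdz_map_stdRank_of_subset {l w : List ℕ} (h : l ⊆ w) :
    stdz (l.map (stdRank w)) = stdz l :=
  stdz_map_of_strictMonoOn ((strictMonoOn_stdRank w).mono fun _ ha => h ha)

theorem stdz_take_stdz (w : List ℕ) (i : ℕ) : stdz ((stdz w).take i) = stdz (w.take i) := by
  rw [stdz_eq_map_stdRank w, ← List.map_take]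
  exact stdz_map_stdRank_of_subset (List.take_subset i w)

theorem stdz_drop_stdz (w : List ℕ) (i : ℕ) : stdz ((stdz w).drop i) = stdz (w.drop i) := by
  rw [stdz_eq_map_stdRank w, ← List.map_drop]
  exact stdz_map_stdRank_of_subset (List.drop_subset i w)

theorem length_stdz (w : List ℕ) : (stdz w).length = w.length := List.length_map _

theorem cutStd_single (σ : List ℕ) : cutStd (Finsupp.single σ 1) = cutStdB σ := by
  simp [cutStd]

theorem map_cutStd_id_cutStdB (σ : List ℕ) :
    TensorProduct.map cutStd LinearMap.id (cutStdB σ) =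
      ∑ j ∈ range (σ.length + 1), ∑ i ∈ range ((σ.take j).length + 1),
        (Finsupp.single (stdz ((σ.take j).take i)) (1 : ℤ) ⊗ₜ[ℤ]
          Finsupp.single (stdz ((σ.take j).drop i)) (1 : ℤ)) ⊗ₜ[ℤ]
            Finsupp.single (stdz (σ.drop j)) (1 : ℤ) := by
  simp only [cutStdB, map_sum, map_tmul, cutStd_single, sum_tmul, LinearMap.id_apply,
    length_stdz, stdz_take_stdz, stdz_drop_stdz]

theorem assoc_map_cutStd_id_cutStdB (σ : List ℕ) :
    (TensorProduct.assoc ℤ _ _ _) ((TensorProduct.map cutStd LinearMap.id) (cutStdB σ)) =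
      ∑ j ∈ range (σ.length + 1), ∑ i ∈ range ((σ.take j).length + 1),
        Finsupp.single (stdz ((σ.take j).take i)) (1 : ℤ) ⊗ₜ[ℤ]
          (Finsupp.single (stdz ((σ.take j).drop i)) (1 : ℤ) ⊗ₜ[ℤ]
            Finsupp.single (stdz (σ.drop j)) (1 : ℤ)) := by
  rw [map_cutStd_id_cutStdB]
  -- The codomain of `cutStd` carries the `ℤ`-module structure `AddCommGroup.toIntModule`, not the
  -- `TensorProduct` one `assoc` expects: `simp` cannot push `assoc` through the sums, defeq can.
  refine (map_sum _ _ _).trans (sum_congr rfl fun j _ => (map_sum _ _ _).trans ?_)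
  exact sum_congr rfl fun i _ => assoc_tmul _ _ _

theorem map_id_cutStd_cutStdB (σ : List ℕ) :
    TensorProduct.map LinearMap.id cutStd (cutStdB σ) =
      ∑ i ∈ range (σ.length + 1), ∑ k ∈ range ((σ.drop i).length + 1),
        Finsupp.single (stdz (σ.take i)) (1 : ℤ) ⊗ₜ[ℤ]
          (Finsupp.single (stdz ((σ.drop i).take k)) (1 : ℤ) ⊗ₜ[ℤ]
            Finsupp.single (stdz ((σ.drop i).drop k)) (1 : ℤ)) := by
  simp only [cutStdB, map_sum, map_tmul, cutStd_single, tmul_sum, LinearMap.id_apply,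
    length_stdz, stdz_take_stdz, stdz_drop_stdz]

/-- The standardization-cut coproduct `μ_MPR` on `MPR = ⊕ₙ ℤSₙ` is coassociative
(permutations in `Sₙ` are identified with words that are permutations of `[1,…,n]`;
it suffices to check coassociativity on these basis elements). -/
theorem mpr_coproduct_coassoc :
    ∀ (n : ℕ) (σ : List ℕ), σ.Perm (List.range' 1 n) →
      (TensorProduct.assoc ℤ _ _ _)
          ((TensorProduct.map cutStd LinearMap.id) (cutStd (Finsupp.single σ 1)))
        = (TensorProduct.map LinearMap.id cutStd) (cutStd (Finsupp.single σ 1)) := by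
  intro _ σ _
  rw [cutStd_single, assoc_map_cutStd_id_cutStdB, map_id_cutStd_cutStdB]
  exact sum_cut_take_eq_sum_cut_drop σ fun α β γ =>
    Finsupp.single (stdz α) 1 ⊗ₜ (Finsupp.single (stdz β) 1 ⊗ₜ Finsupp.single (stdz γ) 1)
end
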